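/- arXiv:2408.06289 — 4 statements merged into one kernel-verified Lean document; each statement's English description precedes it below -/
import Mathlib

section
/- Let f be an amplitude vector with characteristic distribution p, let V be an 𝔽₂-linear subspace of 𝔽₂^{2n}, let z ∈ V, and let z' ∈ 𝔽₂^{2n} with z' ∉ V. Then ∑_{y ∈ V} p(y+z) ≥ ∑_{y ∈ V} p(y+z'). In particular, the coset average (1/|V|)·∑_{y ∈ V} 2ⁿ·p(y+z) over the coset z + V is maximized when the coset is V itself. -/
open Finset

/-- The characteristic distribution of an amplitude vector `f : 𝔽₂ⁿ → ℂ`. -/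
noncomputable def charDist (n : ℕ) (f : (Fin n → ZMod 2) → ℂ) :
    (Fin n → ZMod 2) × (Fin n → ZMod 2) → ℝ :=
  fun x =>
    ((2 : ℝ) ^ n)⁻¹ *
      ‖∑ y : Fin n → ZMod 2,
          f y * (starRingEnd ℂ) (f (y + x.1)) *
            (-1 : ℂ) ^ (∑ i, x.2 i * y i : ZMod 2).val‖ ^ 2

namespace S10

noncomputable def eC (t : ZMod 2) : ℂ := (-1) ^ t.val
noncomputable def eR (t : ZMod 2) : ℝ := (-1) ^ t.val

lemma eR_ofReal (t : ZMod 2) : ((eR t : ℝ) : ℂ) = eC t := by simp [eC, eR]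

lemma zmod2_cases (t : ZMod 2) : t = 0 ∨ t = 1 := by
  fin_cases t
  · exact Or.inl rfl
  · exact Or.inr rfl

lemma val20 : (0 : ZMod 2).val = 0 := rfl
lemma val21 : (1 : ZMod 2).val = 1 := rfl
lemma val22 : (1 + 1 : ZMod 2).val = 0 := rfl

lemma eC_add (s t : ZMod 2) : eC (s + t) = eC s * eC t := by
  rcases zmod2_cases s with h | h <;> rcases zmod2_cases t with h' | h' <;>
    subst h <;> subst h' <;> simp [eC, val20, val21, val22]

lemma conj_eC (t : ZMod 2) : (starRingEnd ℂ) (eC t) = eC t := by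
  rcases zmod2_cases t with h | h <;> subst h <;> simp [eC, val20, val21]

lemma eR_add (s t : ZMod 2) : eR (s + t) = eR s * eR t := by
  rcases zmod2_cases s with h | h <;> rcases zmod2_cases t with h' | h' <;>
    subst h <;> subst h' <;> simp [eR, val20, val21, val22]

lemma eR_le_one (t : ZMod 2) : eR t ≤ 1 := by
  rcases zmod2_cases t with h | h <;> subst h <;> simp [eR, val20, val21]

lemma eR_zero : eR 0 = 1 := by simp [eR, val20]

lemma eR_one' : eR 1 = -1 := by simp [eR, val21]

lemma eC_zero' : eC 0 = 1 := by simp [eC, val20]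

lemma eC_one : eC 1 = -1 := by simp [eC, val21]

def bil {n : ℕ} (w x : Fin n → ZMod 2) : ZMod 2 := ∑ i, w i * x i

lemma bil_add_left {n : ℕ} (w w' x : Fin n → ZMod 2) :
    bil (w + w') x = bil w x + bil w' x := by
  simp [bil, add_mul, Finset.sum_add_distrib]

lemma bil_add_right {n : ℕ} (w x x' : Fin n → ZMod 2) :
    bil w (x + x') = bil w x + bil w x' := by
  simp [bil, mul_add, Finset.sum_add_distrib]

lemma bil_comm {n : ℕ} (w x : Fin n → ZMod 2) : bil w x = bil x w := by
  simp [bil, mul_comm]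

lemma bil_single {n : ℕ} (i : Fin n) (x : Fin n → ZMod 2) :
    bil (Pi.single i 1) x = x i := by
  rw [bil, Finset.sum_eq_single i]
  · simp
  · intro j _ hj; simp [Pi.single_eq_of_ne hj]
  · intro h; exact absurd (Finset.mem_univ i) h

lemma addself {n : ℕ} (x : Fin n → ZMod 2) : x + x = 0 := by
  funext i
  have : ∀ t : ZMod 2, t + t = 0 := by decide
  exact this (x i)

lemma negself {n : ℕ} (x : Fin n → ZMod 2) : -x = x := by
  funext i
  have : ∀ t : ZMod 2, -t = t := by decide
  exact this (x i)

lemma bil_zero_right {n : ℕ} (w : Fin n → ZMod 2) : bil w 0 = 0 := by simp [bil]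

lemma sum_eC_bil {n : ℕ} (x : Fin n → ZMod 2) :
    ∑ w : Fin n → ZMod 2, eC (bil w x) = if x = 0 then (2 : ℂ) ^ n else 0 := by
  split_ifs with h
  · subst h
    simp only [bil_zero_right, eC_zero', Finset.sum_const, Finset.card_univ]
    simp [Fintype.card_fun]
  · obtain ⟨i, hi⟩ := Function.ne_iff.mp h
    have hxi : x i = 1 := by
      rcases zmod2_cases (x i) with h0 | h1
      · exact absurd h0 hi
      · exact h1
    have key : ∑ w : Fin n → ZMod 2, eC (bil w x)
        = ∑ w : Fin n → ZMod 2, eC (bil (Pi.single i 1 + w) x) :=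
      (Fintype.sum_equiv (Equiv.addLeft (Pi.single i 1)) _ _ (fun w => rfl)).symm
    have step : ∀ w : Fin n → ZMod 2, eC (bil (Pi.single i 1 + w) x) = -eC (bil w x) := by
      intro w
      rw [bil_add_left, bil_single, hxi, eC_add, eC_one]
      ring
    have hsum : ∑ w : Fin n → ZMod 2, eC (bil w x)
        = -∑ w : Fin n → ZMod 2, eC (bil w x) := by
      conv_lhs => rw [key, Finset.sum_congr rfl (fun w _ => step w),
        Finset.sum_neg_distrib]
    linear_combination hsum / 2

def sp {n : ℕ} (a b : (Fin n → ZMod 2) × (Fin n → ZMod 2)) : ZMod 2 :=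
  bil a.1 b.2 + bil a.2 b.1

lemma sp_add_right {n : ℕ} (a b b' : (Fin n → ZMod 2) × (Fin n → ZMod 2)) :
    sp a (b + b') = sp a b + sp a b' := by
  simp only [sp, Prod.fst_add, Prod.snd_add, bil_add_right]
  ring

open scoped Classical in
lemma Ksum {n : ℕ} (V : Submodule (ZMod 2) ((Fin n → ZMod 2) × (Fin n → ZMod 2)))
    (a : (Fin n → ZMod 2) × (Fin n → ZMod 2)) :
    (¬ (∀ y ∈ V, sp a y = 0) → ∑ y : V, eR (sp a ↑y) = 0) ∧
      ((∀ y ∈ V, sp a y = 0) → ∑ y : V, eR (sp a ↑y) = Fintype.card V) := by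
  constructor
  · intro h
    push_neg at h
    obtain ⟨y0, hy0V, hy0⟩ := h
    have hy1 : sp a y0 = 1 := by
      rcases zmod2_cases (sp a y0) with h0 | h1
      · exact absurd h0 hy0
      · exact h1
    have key : ∑ y : V, eR (sp a ↑y)
        = ∑ y : V, eR (sp a ↑((⟨y0, hy0V⟩ : V) + y)) :=
      (Fintype.sum_equiv (Equiv.addLeft (⟨y0, hy0V⟩ : V)) _ _ (fun w => rfl)).symm
    have step : ∀ y : V, eR (sp a ↑((⟨y0, hy0V⟩ : V) + y)) = -eR (sp a ↑y) := by
      intro y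
      have : (((⟨y0, hy0V⟩ : V) + y : V) : _) = (y0 + ↑y : _) := rfl
      rw [this, sp_add_right, eR_add, hy1, eR_one']
      ring
    have hsum : ∑ y : V, eR (sp a ↑y) = -∑ y : V, eR (sp a ↑y) := by
      conv_lhs => rw [key, Finset.sum_congr rfl (fun y _ => step y),
        Finset.sum_neg_distrib]
    linarith
  · intro h
    rw [Finset.sum_congr rfl (fun y _ => by rw [h ↑y y.2, eR_zero])]
    simp

noncomputable def cf {n : ℕ} (f : (Fin n → ZMod 2) → ℂ)
    (a : (Fin n → ZMod 2) × (Fin n → ZMod 2)) : ℂ :=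
  ∑ x : Fin n → ZMod 2, f x * (starRingEnd ℂ) (f (x + a.1)) * eC (bil a.2 x)

lemma conj_cf {n : ℕ} (f : (Fin n → ZMod 2) → ℂ)
    (a : (Fin n → ZMod 2) × (Fin n → ZMod 2)) :
    (starRingEnd ℂ) (cf f a)
      = ∑ x : Fin n → ZMod 2,
          (starRingEnd ℂ) (f x) * f (x + a.1) * eC (bil a.2 x) := by
  rw [cf, map_sum]
  exact Finset.sum_congr rfl fun x _ => by
    rw [map_mul, map_mul, conj_eC, Complex.conj_conj]

lemma key_id {n : ℕ} (f : (Fin n → ZMod 2) → ℂ)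
    (b : (Fin n → ZMod 2) × (Fin n → ZMod 2)) :
    ∑ a : (Fin n → ZMod 2) × (Fin n → ZMod 2),
        cf f a * (starRingEnd ℂ) (cf f a) * eC (sp a b)
      = (2 : ℂ) ^ n * (cf f b * (starRingEnd ℂ) (cf f b)) := by
  calc
    ∑ a : (Fin n → ZMod 2) × (Fin n → ZMod 2),
        cf f a * (starRingEnd ℂ) (cf f a) * eC (sp a b)
      = ∑ v : Fin n → ZMod 2, ∑ w : Fin n → ZMod 2, ∑ x : Fin n → ZMod 2,
          ∑ y : Fin n → ZMod 2,
          f x * (starRingEnd ℂ) (f (x + v)) * (starRingEnd ℂ) (f y) * f (y + v)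
            * eC (bil v b.2) * eC (bil w (x + y + b.1)) := by
        rw [Fintype.sum_prod_type]
        refine Finset.sum_congr rfl fun v _ => Finset.sum_congr rfl fun w _ => ?_
        rw [conj_cf, cf, Finset.sum_mul_sum, Finset.sum_mul]
        refine Finset.sum_congr rfl fun x _ => ?_
        rw [Finset.sum_mul]
        refine Finset.sum_congr rfl fun y _ => ?_
        show f x * (starRingEnd ℂ) (f (x + v)) * eC (bil w x)
            * ((starRingEnd ℂ) (f y) * f (y + v) * eC (bil w y)) * eC (sp (v, w) b) = _
        simp only [sp, bil_add_right, eC_add]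
        ring
    _ = ∑ v : Fin n → ZMod 2, ∑ x : Fin n → ZMod 2,
          (f x * (starRingEnd ℂ) (f (x + v)) * (starRingEnd ℂ) (f (x + b.1))
            * f (x + b.1 + v) * eC (bil v b.2)) * (2 : ℂ) ^ n := by
        refine Finset.sum_congr rfl fun v _ => ?_
        rw [Finset.sum_comm]
        refine Finset.sum_congr rfl fun x _ => ?_
        rw [Finset.sum_comm]
        calc
          ∑ y : Fin n → ZMod 2, ∑ w : Fin n → ZMod 2,
              f x * (starRingEnd ℂ) (f (x + v)) * (starRingEnd ℂ) (f y) * f (y + v)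
                * eC (bil v b.2) * eC (bil w (x + y + b.1))
            = ∑ y : Fin n → ZMod 2,
                if y = x + b.1 then
                  (f x * (starRingEnd ℂ) (f (x + v)) * (starRingEnd ℂ) (f y) * f (y + v)
                    * eC (bil v b.2)) * (2 : ℂ) ^ n
                else 0 := by
              refine Finset.sum_congr rfl fun y _ => ?_
              rw [← Finset.mul_sum, sum_eC_bil]
              have hcond : (x + y + b.1 = 0) ↔ (y = x + b.1) := by
                rw [show x + y + b.1 = y + (x + b.1) from by ring,
                  add_eq_zero_iff_eq_neg, negself]
              rw [mul_ite, mul_zero]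
              simp only [hcond]
          _ = _ := by
              rw [Finset.sum_ite_eq' Finset.univ (x + b.1)]
              simp
    _ = (∑ v : Fin n → ZMod 2, ∑ x : Fin n → ZMod 2,
          f x * (starRingEnd ℂ) (f (x + v)) * (starRingEnd ℂ) (f (x + b.1))
            * f (x + b.1 + v) * eC (bil v b.2)) * (2 : ℂ) ^ n := by
        rw [Finset.sum_mul]
        exact Finset.sum_congr rfl fun v _ => (Finset.sum_mul _ _ _).symm
    _ = (∑ x : Fin n → ZMod 2, f x * (starRingEnd ℂ) (f (x + b.1)) * eC (bil b.2 x))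
          * (∑ u : Fin n → ZMod 2, (starRingEnd ℂ) (f u) * f (u + b.1) * eC (bil b.2 u))
          * (2 : ℂ) ^ n := by
        congr 1
        rw [Finset.sum_mul_sum, Finset.sum_comm]
        refine Finset.sum_congr rfl fun x _ => ?_
        refine (Fintype.sum_equiv (Equiv.addLeft x) _ _ fun u => ?_).symm
        simp only [Equiv.coe_addLeft]
        rw [show x + (x + u) = u from by rw [← add_assoc, addself, zero_add],
          show x + b.1 + (x + u) = u + b.1 from by
            rw [show x + b.1 + (x + u) = x + x + (u + b.1) from by ring, addself,
              zero_add],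
          bil_add_left, eC_add, bil_comm x b.2, bil_comm u b.2]
        ring
    _ = (2 : ℂ) ^ n * (cf f b * (starRingEnd ℂ) (cf f b)) := by
        rw [conj_cf, cf]
        ring

lemma norm_sq_ofReal (z : ℂ) : ((‖z‖ ^ 2 : ℝ) : ℂ) = z * (starRingEnd ℂ) z := by
  rw [Complex.mul_conj, Complex.sq_norm]

lemma key_idR {n : ℕ} (f : (Fin n → ZMod 2) → ℂ)
    (b : (Fin n → ZMod 2) × (Fin n → ZMod 2)) :
    ∑ a : (Fin n → ZMod 2) × (Fin n → ZMod 2),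
        ‖cf f a‖ ^ 2 * eR (sp a b) = (2 : ℝ) ^ n * ‖cf f b‖ ^ 2 := by
  apply Complex.ofReal_injective
  push_cast
  calc
    ∑ a : (Fin n → ZMod 2) × (Fin n → ZMod 2),
        ((‖cf f a‖ : ℂ) ^ 2 * (eR (sp a b) : ℂ))
      = ∑ a : (Fin n → ZMod 2) × (Fin n → ZMod 2),
          cf f a * (starRingEnd ℂ) (cf f a) * eC (sp a b) := by
        refine Finset.sum_congr rfl fun a _ => ?_
        rw [← eR_ofReal, ← norm_sq_ofReal]
        push_cast
        ring
    _ = (2 : ℂ) ^ n * (cf f b * (starRingEnd ℂ) (cf f b)) := key_id f b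
    _ = 2 ^ n * (‖cf f b‖ : ℂ) ^ 2 := by
        rw [← norm_sq_ofReal]
        push_cast
        ring

end S10

set_option maxHeartbeats 1000000 in
open S10 in
open scoped Classical in
/-- for a subspace `V` of `𝔽₂^{2n}`, `z ∈ V` and `z' ∉ V`,
`∑_{y ∈ V} p(y+z) ≥ ∑_{y ∈ V} p(y+z')`; in particular the coset average of
the characteristic distribution is maximized on the coset `V` itself. -/
theorem stmt_10 (n : ℕ) (hn : 1 ≤ n) (f : (Fin n → ZMod 2) → ℂ)
    (hf : ∑ x : Fin n → ZMod 2, ‖f x‖ ^ 2 = 1)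
    (V : Submodule (ZMod 2) ((Fin n → ZMod 2) × (Fin n → ZMod 2)))
    (z z' : (Fin n → ZMod 2) × (Fin n → ZMod 2))
    (hz : z ∈ V) (hz' : z' ∉ V) :
    (∑ y : V, charDist n f ((y : (Fin n → ZMod 2) × (Fin n → ZMod 2)) + z)) ≥
      ∑ y : V, charDist n f ((y : (Fin n → ZMod 2) × (Fin n → ZMod 2)) + z') := by
  have hchar : ∀ a, charDist n f a = ((2 : ℝ) ^ n)⁻¹ * ‖cf f a‖ ^ 2 := fun a => rfl
  have hNb : ∀ b, ‖cf f b‖ ^ 2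
      = ((2 : ℝ) ^ n)⁻¹ * ∑ a : (Fin n → ZMod 2) × (Fin n → ZMod 2),
          ‖cf f a‖ ^ 2 * eR (sp a b) := by
    intro b
    rw [key_idR]
    rw [← mul_assoc, inv_mul_cancel₀ (by positivity : (2 : ℝ) ^ n ≠ 0), one_mul]
  have coset : ∀ c : (Fin n → ZMod 2) × (Fin n → ZMod 2),
      (∑ y : V, ‖cf f ((y : (Fin n → ZMod 2) × (Fin n → ZMod 2)) + c)‖ ^ 2)
        = ((2 : ℝ) ^ n)⁻¹ * ∑ a : (Fin n → ZMod 2) × (Fin n → ZMod 2),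
            ‖cf f a‖ ^ 2 * eR (sp a c) * (∑ y : V, eR (sp a ↑y)) := by
    intro c
    calc
      ∑ y : V, ‖cf f ((y : (Fin n → ZMod 2) × (Fin n → ZMod 2)) + c)‖ ^ 2
        = ∑ y : V, ((2 : ℝ) ^ n)⁻¹
            * ∑ a : (Fin n → ZMod 2) × (Fin n → ZMod 2),
                ‖cf f a‖ ^ 2 * eR (sp a (↑y + c)) :=
          by
            refine Finset.sum_congr rfl fun y _ => ?_
            exact hNb _
      _ = ((2 : ℝ) ^ n)⁻¹ * ∑ y : V, ∑ a : (Fin n → ZMod 2) × (Fin n → ZMod 2),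
            ‖cf f a‖ ^ 2 * eR (sp a (↑y + c)) := by rw [Finset.mul_sum]
      _ = ((2 : ℝ) ^ n)⁻¹ * ∑ a : (Fin n → ZMod 2) × (Fin n → ZMod 2),
            ‖cf f a‖ ^ 2 * eR (sp a c) * (∑ y : V, eR (sp a ↑y)) := by
          rw [Finset.sum_comm]
          congr 1
          refine Finset.sum_congr rfl fun a _ => ?_
          rw [Finset.mul_sum]
          refine Finset.sum_congr rfl fun y _ => ?_
          rw [sp_add_right, eR_add]
          ring
  have main : ∑ a : (Fin n → ZMod 2) × (Fin n → ZMod 2),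
        ‖cf f a‖ ^ 2 * eR (sp a z') * (∑ y : V, eR (sp a ↑y))
      ≤ ∑ a : (Fin n → ZMod 2) × (Fin n → ZMod 2),
        ‖cf f a‖ ^ 2 * eR (sp a z) * (∑ y : V, eR (sp a ↑y)) := by
    refine Finset.sum_le_sum fun a _ => ?_
    by_cases h : ∀ y ∈ V, sp a y = 0
    · rw [(Ksum V a).2 h, h z hz, eR_zero]
      have h1 : eR (sp a z') ≤ 1 := eR_le_one _
      have h2 : (0 : ℝ) ≤ ‖cf f a‖ ^ 2 := by positivity
      have h3 : (0 : ℝ) ≤ (Fintype.card V : ℝ) := Nat.cast_nonneg _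
      nlinarith [mul_nonneg h2 h3]
    · rw [(Ksum V a).1 h]
      simp
  calc
    ∑ y : V, charDist n f ((y : (Fin n → ZMod 2) × (Fin n → ZMod 2)) + z')
      = ((2 : ℝ) ^ n)⁻¹
          * ∑ y : V, ‖cf f ((y : (Fin n → ZMod 2) × (Fin n → ZMod 2)) + z')‖ ^ 2 := by
        rw [Finset.mul_sum]
        exact Finset.sum_congr rfl fun y _ => hchar _
    _ ≤ ((2 : ℝ) ^ n)⁻¹
          * ∑ y : V, ‖cf f ((y : (Fin n → ZMod 2) × (Fin n → ZMod 2)) + z)‖ ^ 2 := by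
        rw [coset z, coset z']
        exact mul_le_mul_of_nonneg_left
          (mul_le_mul_of_nonneg_left main (by positivity)) (by positivity)
    _ = ∑ y : V, charDist n f ((y : (Fin n → ZMod 2) × (Fin n → ZMod 2)) + z) := by
        rw [Finset.mul_sum]
        exact (Finset.sum_congr rfl fun y _ => hchar _).symm
end

section
/- Let f be an amplitude vector with characteristic distribution p, let γ ∈ (0,1], and let V be an 𝔽₂-linear subspace of 𝔽₂^{2n} such that (1/|V|) · ∑_{y ∈ V} 2ⁿ · p(y) ≥ γ. Then there exist an integer N with 1 ≤ N ≤ γ^{-2} and Lagrangian subspaces L₁, …, L_N of 𝔽₂^{2n} such that V ⊆ L₁ ∪ ⋯ ∪ L_N. (That is, the set of Weyl operators corresponding to V has a stabilizer covering of size at most γ^{-2}.) -/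
open Finset

/-- The symplectic product on `𝔽₂^{2n}`: `[x,y] = ⟨x₁,y₂⟩ + ⟨x₂,y₁⟩`. -/
def sympl (n : ℕ) (x y : (Fin n → ZMod 2) × (Fin n → ZMod 2)) : ZMod 2 :=
  (∑ i, x.1 i * y.2 i) + (∑ i, x.2 i * y.1 i)

/-- A Lagrangian subspace of `𝔽₂^{2n}`: an `𝔽₂`-linear subspace of dimension `n`
on which the symplectic product vanishes identically. -/
def IsLagrangian (n : ℕ)
    (L : Submodule (ZMod 2) ((Fin n → ZMod 2) × (Fin n → ZMod 2))) : Prop :=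
  Module.finrank (ZMod 2) L = n ∧ ∀ x ∈ L, ∀ y ∈ L, sympl n x y = 0



namespace Stmt13
variable {n : ℕ}

noncomputable def sgn (a : ZMod 2) : ℂ := (-1 : ℂ) ^ a.val

lemma zmod2_cases (a : ZMod 2) : a = 0 ∨ a = 1 := by revert a; decide

@[simp] lemma sgn_zero : sgn (0 : ZMod 2) = 1 := rfl
@[simp] lemma sgn_one : sgn (1 : ZMod 2) = -1 := by norm_num [sgn, ZMod.val_one]

lemma zmod2_11 : (1 + 1 : ZMod 2) = 0 := by decide

lemma sgn_add (a b : ZMod 2) : sgn (a + b) = sgn a * sgn b := by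
  rcases zmod2_cases a with ha | ha <;> rcases zmod2_cases b with hb | hb <;>
    subst ha <;> subst hb <;> simp [zmod2_11]

lemma sgn_mul_self (a : ZMod 2) : sgn a * sgn a = 1 := by
  rcases zmod2_cases a with h | h <;> subst h <;> norm_num

@[simp] lemma conj_sgn (a : ZMod 2) : (starRingEnd ℂ) (sgn a) = sgn a := by
  rcases zmod2_cases a with h | h <;> subst h <;> simp

@[simp] lemma norm_sgn (a : ZMod 2) : ‖sgn a‖ = 1 := by
  rcases zmod2_cases a with h | h <;> subst h <;> simp

def ip (w x : Fin n → ZMod 2) : ZMod 2 := ∑ i, w i * x i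

lemma ip_add_right (w x y : Fin n → ZMod 2) : ip w (x + y) = ip w x + ip w y := by
  simp [ip, mul_add, Finset.sum_add_distrib]

lemma ip_add_left (w w' x : Fin n → ZMod 2) : ip (w + w') x = ip w x + ip w' x := by
  simp [ip, add_mul, Finset.sum_add_distrib]

@[simp] lemma ip_zero_left (x : Fin n → ZMod 2) : ip 0 x = 0 := by simp [ip]
@[simp] lemma ip_zero_right (x : Fin n → ZMod 2) : ip x 0 = 0 := by simp [ip]

lemma sympl_eq (x y : (Fin n → ZMod 2) × (Fin n → ZMod 2)) :
    sympl n x y = ip x.1 y.2 + ip x.2 y.1 := rfl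

/-! ### Weyl operators -/

noncomputable def Wop (y : (Fin n → ZMod 2) × (Fin n → ZMod 2)) (g : (Fin n → ZMod 2) → ℂ) :
    (Fin n → ZMod 2) → ℂ := fun x => sgn (ip y.2 x) * g (x + y.1)

noncomputable def inn (g h : (Fin n → ZMod 2) → ℂ) : ℂ := ∑ x, (starRingEnd ℂ) (g x) * h x
noncomputable def ns (g : (Fin n → ZMod 2) → ℂ) : ℝ := ∑ x, ‖g x‖ ^ 2

@[simp] lemma Wop_zero (g : (Fin n → ZMod 2) → ℂ) : Wop 0 g = g := by
  funext x; simp [Wop]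

lemma Wop_Wop (y z : (Fin n → ZMod 2) × (Fin n → ZMod 2)) (g : (Fin n → ZMod 2) → ℂ) :
    Wop y (Wop z g) = fun x => sgn (ip z.2 y.1) * Wop (y + z) g x := by
  funext x
  show sgn (ip y.2 x) * (sgn (ip z.2 (x + y.1)) * g (x + y.1 + z.1)) = _
  have hx : x + y.1 + z.1 = x + (y + z).1 := by
    show _ = x + (y.1 + z.1); rw [add_assoc]
  rw [hx, ip_add_right, sgn_add]
  show _ = sgn (ip z.2 y.1) * (sgn (ip (y.2 + z.2) x) * g (x + (y+z).1))
  rw [ip_add_left, sgn_add]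
  ring

lemma Wop_add (y : (Fin n → ZMod 2) × (Fin n → ZMod 2)) (g h : (Fin n → ZMod 2) → ℂ) :
    Wop y (g + h) = Wop y g + Wop y h := by
  funext x; simp [Wop, mul_add]

lemma Wop_neg (y : (Fin n → ZMod 2) × (Fin n → ZMod 2)) (g : (Fin n → ZMod 2) → ℂ) :
    Wop y (-g) = -(Wop y g) := by
  funext x; simp [Wop]

lemma Wop_smul (c : ℂ) (y : (Fin n → ZMod 2) × (Fin n → ZMod 2)) (g : (Fin n → ZMod 2) → ℂ) :
    Wop y (c • g) = c • Wop y g := by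
  funext x; simp [Wop]; ring

lemma inn_add_right (g h h' : (Fin n → ZMod 2) → ℂ) : inn g (h + h') = inn g h + inn g h' := by
  simp [inn, mul_add, Finset.sum_add_distrib]

lemma inn_add_left (g g' h : (Fin n → ZMod 2) → ℂ) : inn (g + g') h = inn g h + inn g' h := by
  simp [inn, add_mul, Finset.sum_add_distrib]

lemma inn_neg_right (g h : (Fin n → ZMod 2) → ℂ) : inn g (-h) = -inn g h := by
  simp [inn, Finset.sum_neg_distrib]

lemma inn_neg_left (g h : (Fin n → ZMod 2) → ℂ) : inn (-g) h = -inn g h := by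
  simp [inn, Finset.sum_neg_distrib]

lemma inn_smul_right (c : ℂ) (g h : (Fin n → ZMod 2) → ℂ) : inn g (c • h) = c * inn g h := by
  simp [inn, Finset.mul_sum]; congr 1; funext x; ring

lemma inn_smul_left (c : ℂ) (g h : (Fin n → ZMod 2) → ℂ) :
    inn (c • g) h = (starRingEnd ℂ) c * inn g h := by
  simp [inn, Finset.mul_sum]; congr 1; funext x; ring

-- unitarity
lemma inn_Wop_Wop (y : (Fin n → ZMod 2) × (Fin n → ZMod 2)) (g h : (Fin n → ZMod 2) → ℂ) :
    inn (Wop y g) (Wop y h) = inn g h := by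
  unfold inn Wop
  have : ∀ x, (starRingEnd ℂ) (sgn (ip y.2 x) * g (x + y.1)) * (sgn (ip y.2 x) * h (x + y.1))
      = (starRingEnd ℂ) (g (x + y.1)) * h (x + y.1) := by
    intro x
    rw [map_mul, conj_sgn, mul_mul_mul_comm, sgn_mul_self, one_mul]
  rw [Finset.sum_congr rfl (fun x _ => this x)]
  exact Fintype.sum_equiv (Equiv.addRight y.1) _ _ (fun x => rfl)

-- adjoint
lemma inn_Wop_adjoint (y : (Fin n → ZMod 2) × (Fin n → ZMod 2)) (g h : (Fin n → ZMod 2) → ℂ) :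
    inn (Wop y g) h = sgn (ip y.2 y.1) * inn g (Wop y h) := by
  unfold inn Wop
  rw [Finset.mul_sum]
  apply Fintype.sum_equiv (Equiv.addRight y.1)
  intro x
  show (starRingEnd ℂ) (sgn (ip y.2 x) * g (x + y.1)) * h x
      = sgn (ip y.2 y.1) *
        ((starRingEnd ℂ) (g (x + y.1)) * (sgn (ip y.2 (x + y.1)) * h (x + y.1 + y.1)))
  have h2 : x + y.1 + y.1 = x := by
    rw [add_assoc]
    have : y.1 + y.1 = 0 := by
      funext i; show y.1 i + y.1 i = 0
      rcases zmod2_cases (y.1 i) with h | h <;> rw [h] <;> decide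
    rw [this, add_zero]
  rw [h2, ip_add_right, sgn_add, map_mul, conj_sgn]
  have hs := sgn_mul_self (ip y.2 y.1)
  linear_combination (-((starRingEnd ℂ) (g (x + y.1)) * sgn (ip y.2 x) * h x)) * hs

lemma conj_mul_self_eq (z : ℂ) : (starRingEnd ℂ) z * z = ((‖z‖^2 : ℝ) : ℂ) := by
  rw [← Complex.normSq_eq_conj_mul_self]
  simp [Complex.normSq_eq_norm_sq]

lemma ns_eq_inn (g : (Fin n → ZMod 2) → ℂ) : (ns g : ℂ) = inn g g := by
  unfold ns inn
  push_cast
  congr 1; funext x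
  rw [conj_mul_self_eq]
  push_cast
  ring

lemma ns_Wop (y : (Fin n → ZMod 2) × (Fin n → ZMod 2)) (g : (Fin n → ZMod 2) → ℂ) :
    ns (Wop y g) = ns g := by
  have := inn_Wop_Wop y g g
  have h1 := ns_eq_inn (Wop y g)
  have h2 := ns_eq_inn g
  have : (ns (Wop y g) : ℂ) = (ns g : ℂ) := by rw [h1, h2, this]
  exact_mod_cast this

lemma ns_smul (c : ℂ) (g : (Fin n → ZMod 2) → ℂ) : ns (c • g) = ‖c‖^2 * ns g := by
  unfold ns
  rw [Finset.mul_sum]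
  congr 1; funext x
  simp [norm_mul, mul_pow]

lemma cauchy_schwarz (g h : (Fin n → ZMod 2) → ℂ) : ‖inn g h‖^2 ≤ ns g * ns h := by
  have h1 : ‖inn g h‖ ≤ ∑ x, ‖g x‖ * ‖h x‖ := by
    refine (norm_sum_le _ _).trans ?_
    apply Finset.sum_le_sum
    intro i _
    simp [norm_mul]
  have h2 : (∑ x, ‖g x‖ * ‖h x‖)^2 ≤ (∑ x, ‖g x‖^2) * (∑ x, ‖h x‖^2) :=
    Finset.sum_mul_sq_le_sq_mul_sq Finset.univ _ _
  calc ‖inn g h‖^2 ≤ (∑ x, ‖g x‖ * ‖h x‖)^2 := by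
        apply pow_le_pow_left₀ (norm_nonneg _) h1
      _ ≤ _ := h2

variable {n : ℕ}
lemma ip_comm (w x : Fin n → ZMod 2) : ip w x = ip x w := by
  unfold ip; exact Finset.sum_congr rfl (fun i _ => mul_comm _ _)

lemma zmod2_add_self (a : ZMod 2) : a + a = 0 := by
  rcases zmod2_cases a with h | h <;> subst h <;> decide

lemma zmod2_eq_of_add_zero {a b : ZMod 2} (h : a + b = 0) : a = b := by
  revert h; revert a b; decide

lemma sgn_of_add_one {a b : ZMod 2} (h : a + b = 1) : sgn a = -sgn b := by
  rcases zmod2_cases a with ha | ha <;> rcases zmod2_cases b with hb | hb <;>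
    subst ha <;> subst hb <;> simp_all <;> rfl

lemma m_add_self (e : (Fin n → ZMod 2) × (Fin n → ZMod 2)) : e + e = 0 := by
  ext i <;> exact zmod2_add_self _

noncomputable def ph (e : (Fin n → ZMod 2) × (Fin n → ZMod 2)) : ℂ :=
  if ip e.2 e.1 = 0 then 1 else Complex.I

noncomputable def Eop (e : (Fin n → ZMod 2) × (Fin n → ZMod 2)) (g : (Fin n → ZMod 2) → ℂ) :
    (Fin n → ZMod 2) → ℂ := ph e • Wop e g

lemma ph_sq (e : (Fin n → ZMod 2) × (Fin n → ZMod 2)) :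
    ph e * ph e = sgn (ip e.2 e.1) := by
  unfold ph
  rcases zmod2_cases (ip e.2 e.1) with h | h <;> rw [h] <;> simp [Complex.I_mul_I]

lemma conj_ph (e : (Fin n → ZMod 2) × (Fin n → ZMod 2)) :
    (starRingEnd ℂ) (ph e) * sgn (ip e.2 e.1) = ph e := by
  unfold ph
  rcases zmod2_cases (ip e.2 e.1) with h | h <;> rw [h] <;> simp

@[simp] lemma norm_ph (e : (Fin n → ZMod 2) × (Fin n → ZMod 2)) : ‖ph e‖ = 1 := by
  unfold ph; split <;> simp

lemma Eop_add (e : (Fin n → ZMod 2) × (Fin n → ZMod 2)) (g h : (Fin n → ZMod 2) → ℂ) :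
    Eop e (g + h) = Eop e g + Eop e h := by
  unfold Eop; rw [Wop_add, smul_add]

lemma Eop_neg (e : (Fin n → ZMod 2) × (Fin n → ZMod 2)) (g : (Fin n → ZMod 2) → ℂ) :
    Eop e (-g) = -Eop e g := by
  unfold Eop; rw [Wop_neg, smul_neg]

lemma Eop_sub (e : (Fin n → ZMod 2) × (Fin n → ZMod 2)) (g h : (Fin n → ZMod 2) → ℂ) :
    Eop e (g - h) = Eop e g - Eop e h := by
  rw [sub_eq_add_neg, Eop_add, Eop_neg, sub_eq_add_neg]

lemma Eop_smul (c : ℂ) (e : (Fin n → ZMod 2) × (Fin n → ZMod 2)) (g : (Fin n → ZMod 2) → ℂ) :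
    Eop e (c • g) = c • Eop e g := by
  unfold Eop; rw [Wop_smul, smul_comm]

lemma Eop_Eop (e : (Fin n → ZMod 2) × (Fin n → ZMod 2)) (g : (Fin n → ZMod 2) → ℂ) :
    Eop e (Eop e g) = g := by
  unfold Eop
  rw [Wop_smul]
  have h1 : Wop e (Wop e g) = fun x => sgn (ip e.2 e.1) * Wop (e + e) g x := Wop_Wop e e g
  rw [smul_smul, h1]
  funext x
  have : (ph e * ph e) • (fun x => sgn (ip e.2 e.1) * Wop (e+e) g x) = fun x => Wop 0 g x := by
    funext z
    rw [ph_sq]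
    show sgn (ip e.2 e.1) * (sgn (ip e.2 e.1) * Wop (e+e) g z) = _
    rw [← mul_assoc, sgn_mul_self, one_mul, m_add_self]
  rw [this]
  simp

lemma inn_Eop_left (e : (Fin n → ZMod 2) × (Fin n → ZMod 2)) (g h : (Fin n → ZMod 2) → ℂ) :
    inn (Eop e g) h = inn g (Eop e h) := by
  unfold Eop
  rw [inn_smul_left, inn_smul_right, inn_Wop_adjoint, ← mul_assoc, conj_ph]

lemma ns_Eop (e : (Fin n → ZMod 2) × (Fin n → ZMod 2)) (g : (Fin n → ZMod 2) → ℂ) :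
    ns (Eop e g) = ns g := by
  unfold Eop
  rw [ns_smul, ns_Wop, norm_ph]
  norm_num

lemma Wop_Eop_comm {e y : (Fin n → ZMod 2) × (Fin n → ZMod 2)} (hc : sympl n y e = 0)
    (g : (Fin n → ZMod 2) → ℂ) :
    Wop y (Eop e g) = Eop e (Wop y g) := by
  unfold Eop
  rw [Wop_smul]
  congr 1
  rw [Wop_Wop, Wop_Wop]
  have h1 : ip e.2 y.1 = ip y.2 e.1 := by
    have := hc
    rw [sympl_eq] at this
    have h2 : ip y.1 e.2 + ip y.2 e.1 = 0 := this
    have := zmod2_eq_of_add_zero h2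
    rw [ip_comm] at this
    exact this
  rw [h1]
  funext x
  have : y + e = e + y := add_comm _ _
  rw [this]

lemma Eop_anticomm {e f : (Fin n → ZMod 2) × (Fin n → ZMod 2)} (hef : sympl n e f = 1)
    (g : (Fin n → ZMod 2) → ℂ) :
    Eop e (Eop f g) = -Eop f (Eop e g) := by
  unfold Eop
  rw [Wop_smul, Wop_smul, smul_smul, smul_smul, Wop_Wop, Wop_Wop]
  have hs : sgn (ip f.2 e.1) = -sgn (ip e.2 f.1) := by
    apply sgn_of_add_one
    rw [sympl_eq] at hef
    have : ip e.1 f.2 + ip e.2 f.1 = 1 := hef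
    rw [ip_comm] at this
    exact this
  funext x
  show (ph e * ph f) * (sgn (ip f.2 e.1) * Wop (e + f) g x) = _
  rw [hs]
  have hfe : f + e = e + f := add_comm _ _
  show _ = -((ph f * ph e) * (sgn (ip e.2 f.1) * Wop (f + e) g x))
  rw [hfe]
  ring

noncomputable def pplus (e : (Fin n → ZMod 2) × (Fin n → ZMod 2)) (g : (Fin n → ZMod 2) → ℂ) :
    (Fin n → ZMod 2) → ℂ := (2⁻¹ : ℂ) • (g + Eop e g)
noncomputable def pminus (e : (Fin n → ZMod 2) × (Fin n → ZMod 2)) (g : (Fin n → ZMod 2) → ℂ) :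
    (Fin n → ZMod 2) → ℂ := (2⁻¹ : ℂ) • (g - Eop e g)

lemma pplus_add_pminus (e : (Fin n → ZMod 2) × (Fin n → ZMod 2)) (g : (Fin n → ZMod 2) → ℂ) :
    pplus e g + pminus e g = g := by
  unfold pplus pminus
  funext x
  show (2⁻¹ : ℂ) * (g x + Eop e g x) + (2⁻¹ : ℂ) * (g x - Eop e g x) = g x
  ring

lemma Eop_pplus (e : (Fin n → ZMod 2) × (Fin n → ZMod 2)) (g : (Fin n → ZMod 2) → ℂ) :
    Eop e (pplus e g) = pplus e g := by
  unfold pplus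
  rw [Eop_smul, Eop_add, Eop_Eop]
  congr 1
  rw [add_comm]

lemma Eop_pminus (e : (Fin n → ZMod 2) × (Fin n → ZMod 2)) (g : (Fin n → ZMod 2) → ℂ) :
    Eop e (pminus e g) = -pminus e g := by
  unfold pminus
  rw [Eop_smul, Eop_sub, Eop_Eop, ← smul_neg]
  congr 1
  funext x
  show Eop e g x - g x = -(g x - Eop e g x)
  ring

lemma ns_pplus_add_ns_pminus (e : (Fin n → ZMod 2) × (Fin n → ZMod 2))
    (g : (Fin n → ZMod 2) → ℂ) :
    ns (pplus e g) + ns (pminus e g) = ns g := by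
  unfold ns pplus pminus
  rw [← Finset.sum_add_distrib]
  have key : ∀ x : Fin n → ZMod 2,
      ‖((2⁻¹ : ℂ) • (g + Eop e g)) x‖^2 + ‖((2⁻¹ : ℂ) • (g - Eop e g)) x‖^2
      = (‖g x‖^2 + ‖Eop e g x‖^2) / 2 := by
    intro x
    show ‖(2⁻¹ : ℂ) * (g x + Eop e g x)‖^2 + ‖(2⁻¹ : ℂ) * (g x - Eop e g x)‖^2 = _
    rw [norm_mul, norm_mul, mul_pow, mul_pow]
    have hpl := parallelogram_law_with_norm ℂ (g x) (Eop e g x)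
    have h4 : ‖(2⁻¹ : ℂ)‖^2 = (4 : ℝ)⁻¹ := by norm_num
    rw [h4]
    nlinarith [hpl]
  rw [Finset.sum_congr rfl (fun x _ => key x)]
  have h2 : ns (Eop e g) = ns g := ns_Eop e g
  unfold ns at h2
  rw [← Finset.sum_div, Finset.sum_add_distrib, h2]
  ring

lemma cross_zero_pm {e y : (Fin n → ZMod 2) × (Fin n → ZMod 2)} (hc : sympl n y e = 0)
    {u v : (Fin n → ZMod 2) → ℂ} (hu : Eop e u = u) (hv : Eop e v = -v) :
    inn u (Wop y v) = 0 := by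
  have h1 : inn u (Wop y v) = -inn u (Wop y v) := by
    conv_lhs => rw [← hu]
    rw [inn_Eop_left, ← Wop_Eop_comm hc, hv, Wop_neg, inn_neg_right]
  linear_combination h1 / 2

lemma cross_zero_mp {e y : (Fin n → ZMod 2) × (Fin n → ZMod 2)} (hc : sympl n y e = 0)
    {u v : (Fin n → ZMod 2) → ℂ} (hu : Eop e u = -u) (hv : Eop e v = v) :
    inn u (Wop y v) = 0 := by
  have h1 : inn u (Wop y v) = -inn u (Wop y v) := by
    conv_lhs => rw [← hv]
    rw [Wop_Eop_comm hc, ← inn_Eop_left, hu, inn_neg_left]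
  linear_combination h1 / 2

lemma Wop_sub (y : (Fin n → ZMod 2) × (Fin n → ZMod 2)) (g h : (Fin n → ZMod 2) → ℂ) :
    Wop y (g - h) = Wop y g - Wop y h := by
  funext x; simp [Wop]; ring

lemma inn_sub_right (g h h' : (Fin n → ZMod 2) → ℂ) : inn g (h - h') = inn g h - inn g h' := by
  simp [inn, mul_sub, Finset.sum_sub_distrib]

lemma par_law (a b : ℂ) : ‖a+b‖^2 + ‖a-b‖^2 = 2*‖a‖^2 + 2*‖b‖^2 := by
  have := parallelogram_law_with_norm ℂ a b
  nlinarith [this]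

lemma exists_unit_Wop_Eop (y e : (Fin n → ZMod 2) × (Fin n → ZMod 2))
    (h : (Fin n → ZMod 2) → ℂ) :
    ∃ c : ℂ, ‖c‖ = 1 ∧ Wop y (Eop e h) = c • Wop (y + e) h := by
  refine ⟨ph e * sgn (ip e.2 y.1), by rw [norm_mul, norm_ph, norm_sgn, one_mul], ?_⟩
  unfold Eop
  rw [Wop_smul, Wop_Wop]
  funext x
  show ph e * (sgn (ip e.2 y.1) * Wop (y + e) h x) = _
  show _ = (ph e * sgn (ip e.2 y.1)) * Wop (y+e) h x
  ring

lemma norm_inn_Wop_Eop (g h : (Fin n → ZMod 2) → ℂ)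
    (y e : (Fin n → ZMod 2) × (Fin n → ZMod 2)) :
    ‖inn g (Wop (y + e) h)‖ = ‖inn g (Wop y (Eop e h))‖ := by
  obtain ⟨c, hc, heq⟩ := exists_unit_Wop_Eop y e h
  rw [heq, inn_smul_right, norm_mul, hc, one_mul]

section Coset
variable {e f y : (Fin n → ZMod 2) × (Fin n → ZMod 2)}
variable (g h : (Fin n → ZMod 2) → ℂ)

lemma eigen_fp (hef : sympl n e f = 1) : Eop e (Eop f (pplus e h)) = -(Eop f (pplus e h)) := by
  rw [Eop_anticomm hef, Eop_pplus]

lemma eigen_fm (hef : sympl n e f = 1) : Eop e (Eop f (pminus e h)) = Eop f (pminus e h) := by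
  rw [Eop_anticomm hef, Eop_pminus, Eop_neg, neg_neg]

lemma decomp1 (hye : sympl n y e = 0) :
    inn g (Wop y h)
      = inn (pplus e g) (Wop y (pplus e h)) + inn (pminus e g) (Wop y (pminus e h)) := by
  conv_lhs => rw [← pplus_add_pminus e g, ← pplus_add_pminus e h]
  rw [Wop_add, inn_add_left, inn_add_right, inn_add_right]
  rw [cross_zero_pm hye (Eop_pplus e g) (Eop_pminus e h),
      cross_zero_mp hye (Eop_pminus e g) (Eop_pplus e h)]
  ring

lemma decomp2 (hye : sympl n y e = 0) :
    inn g (Wop y (Eop e h))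
      = inn (pplus e g) (Wop y (pplus e h)) - inn (pminus e g) (Wop y (pminus e h)) := by
  have hsplit : Eop e h = pplus e h - pminus e h := by
    conv_lhs => rw [← pplus_add_pminus e h]
    rw [Eop_add, Eop_pplus, Eop_pminus]
    abel
  rw [hsplit]
  conv_lhs => rw [← pplus_add_pminus e g]
  rw [Wop_sub, inn_sub_right, inn_add_left, inn_add_left]
  rw [cross_zero_pm hye (Eop_pplus e g) (Eop_pminus e h),
      cross_zero_mp hye (Eop_pminus e g) (Eop_pplus e h)]
  ring

lemma decomp3 (hef : sympl n e f = 1) (hye : sympl n y e = 0) :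
    inn g (Wop y (Eop f h))
      = inn (pplus e g) (Wop y (Eop f (pminus e h)))
        + inn (pminus e g) (Wop y (Eop f (pplus e h))) := by
  have hsplit : Eop f h = Eop f (pplus e h) + Eop f (pminus e h) := by
    conv_lhs => rw [← pplus_add_pminus e h]
    rw [Eop_add]
  rw [hsplit]
  conv_lhs => rw [← pplus_add_pminus e g]
  rw [Wop_add, inn_add_left, inn_add_right, inn_add_right]
  rw [cross_zero_pm hye (Eop_pplus e g) (eigen_fp h hef),
      cross_zero_mp hye (Eop_pminus e g) (eigen_fm h hef)]
  ring

lemma decomp4 (hef : sympl n e f = 1) (hye : sympl n y e = 0) :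
    inn g (Wop y (Eop e (Eop f h)))
      = inn (pplus e g) (Wop y (Eop f (pminus e h)))
        - inn (pminus e g) (Wop y (Eop f (pplus e h))) := by
  have hsplit : Eop e (Eop f h) = Eop f (pminus e h) - Eop f (pplus e h) := by
    conv_lhs => rw [← pplus_add_pminus e h]
    rw [Eop_add, Eop_add, eigen_fp h hef, eigen_fm h hef]
    abel
  rw [hsplit]
  conv_lhs => rw [← pplus_add_pminus e g]
  rw [Wop_sub, inn_sub_right, inn_add_left, inn_add_left]
  rw [cross_zero_pm hye (Eop_pplus e g) (eigen_fp h hef),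
      cross_zero_mp hye (Eop_pminus e g) (eigen_fm h hef)]
  ring

lemma coset_sq (hef : sympl n e f = 1) (hye : sympl n y e = 0) :
    ‖inn g (Wop y h)‖^2 + ‖inn g (Wop (y+e) h)‖^2 + ‖inn g (Wop (y+f) h)‖^2
      + ‖inn g (Wop (y+e+f) h)‖^2
    = 2 * (‖inn (pplus e g) (Wop y (pplus e h))‖^2
        + ‖inn (pminus e g) (Wop y (pminus e h))‖^2
        + ‖inn (pplus e g) (Wop y (Eop f (pminus e h)))‖^2
        + ‖inn (pminus e g) (Wop y (Eop f (pplus e h)))‖^2) := by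
  have h1 := decomp1 g h hye
  have h2 := decomp2 g h hye
  have h3 := decomp3 g h hef hye
  have h4 := decomp4 g h hef hye
  have n2 : ‖inn g (Wop (y+e) h)‖ = ‖inn g (Wop y (Eop e h))‖ := norm_inn_Wop_Eop g h y e
  have n3 : ‖inn g (Wop (y+f) h)‖ = ‖inn g (Wop y (Eop f h))‖ := norm_inn_Wop_Eop g h y f
  have n4 : ‖inn g (Wop (y+e+f) h)‖ = ‖inn g (Wop y (Eop e (Eop f h)))‖ := by
    have step1 : ‖inn g (Wop (y+e+f) h)‖ = ‖inn g (Wop (y+e) (Eop f h))‖ :=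
      norm_inn_Wop_Eop g h (y+e) f
    rw [step1]
    obtain ⟨c, hc, heq⟩ := exists_unit_Wop_Eop y e (Eop f h)
    rw [heq, inn_smul_right, norm_mul, hc, one_mul]
  rw [n2, n3, n4, h1, h2, h3, h4]
  have p1 := par_law (inn (pplus e g) (Wop y (pplus e h))) (inn (pminus e g) (Wop y (pminus e h)))
  have p2 := par_law (inn (pplus e g) (Wop y (Eop f (pminus e h))))
    (inn (pminus e g) (Wop y (Eop f (pplus e h))))
  linarith [p1, p2]

end Coset

/-! ### symplectic form lemmas -/

lemma sympl_add_left (x x' y : (Fin n → ZMod 2) × (Fin n → ZMod 2)) :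
    sympl n (x + x') y = sympl n x y + sympl n x' y := by
  simp only [sympl_eq]
  rw [show (x + x').1 = x.1 + x'.1 from rfl, show (x + x').2 = x.2 + x'.2 from rfl,
    ip_add_left, ip_add_left]
  ring

lemma sympl_comm (x y : (Fin n → ZMod 2) × (Fin n → ZMod 2)) :
    sympl n x y = sympl n y x := by
  simp only [sympl_eq]
  rw [ip_comm x.1 y.2, ip_comm x.2 y.1]
  ring

lemma sympl_add_right (x y y' : (Fin n → ZMod 2) × (Fin n → ZMod 2)) :
    sympl n x (y + y') = sympl n x y + sympl n x y' := by
  rw [sympl_comm, sympl_add_left, sympl_comm y x, sympl_comm y' x]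

lemma ip_smul_left (c : ZMod 2) (w x : Fin n → ZMod 2) : ip (c • w) x = c * ip w x := by
  simp [ip, Finset.mul_sum, mul_assoc]

lemma sympl_smul_left (c : ZMod 2) (x y : (Fin n → ZMod 2) × (Fin n → ZMod 2)) :
    sympl n (c • x) y = c * sympl n x y := by
  simp only [sympl_eq]
  rw [show (c • x).1 = c • x.1 from rfl, show (c • x).2 = c • x.2 from rfl,
    ip_smul_left, ip_smul_left]
  ring

lemma sympl_smul_right (c : ZMod 2) (x y : (Fin n → ZMod 2) × (Fin n → ZMod 2)) :
    sympl n x (c • y) = c * sympl n x y := by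
  rw [sympl_comm, sympl_smul_left, sympl_comm y x]

lemma sympl_self (x : (Fin n → ZMod 2) × (Fin n → ZMod 2)) : sympl n x x = 0 := by
  simp only [sympl_eq]
  rw [ip_comm x.1 x.2]
  exact zmod2_add_self _

lemma sympl_zero_left (y : (Fin n → ZMod 2) × (Fin n → ZMod 2)) : sympl n 0 y = 0 := by
  have := sympl_smul_left (0 : ZMod 2) y y
  simpa using this

lemma double_smul_zero (a : ZMod 2) (v : (Fin n → ZMod 2) × (Fin n → ZMod 2)) :
    a • v + a • v = 0 := by
  rw [← add_smul, zmod2_add_self, zero_smul]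

lemma quad_cancel (x A B : (Fin n → ZMod 2) × (Fin n → ZMod 2)) :
    x + A + B + A + B = x + (A + A) + (B + B) := by abel

lemma sum_zmod2 (F : ZMod 2 → ℝ) : ∑ c : ZMod 2, F c = F 0 + F 1 := by
  have : (Finset.univ : Finset (ZMod 2)) = {0, 1} := by decide
  rw [this]
  rw [Finset.sum_insert (by decide), Finset.sum_singleton]



set_option maxHeartbeats 2000000 in
open scoped Classical in
lemma main_bound (m : ℕ) (U : Submodule (ZMod 2) ((Fin n → ZMod 2) × (Fin n → ZMod 2)))
    (hUm : Nat.card U ≤ m) :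
    ∃ (k : ℕ) (R : Submodule (ZMod 2) ((Fin n → ZMod 2) × (Fin n → ZMod 2))),
      R ≤ U ∧ (∀ r ∈ R, ∀ z ∈ U, sympl n r z = 0) ∧
      Nat.card U = 4 ^ k * Nat.card R ∧
      ∀ g h : (Fin n → ZMod 2) → ℂ,
        (∑ y : U, ‖inn g (Wop (y : (Fin n → ZMod 2) × (Fin n → ZMod 2)) h)‖ ^ 2) * 2 ^ k
          ≤ (Nat.card U : ℝ) * (ns g * ns h) := by
  induction m using Nat.strong_induction_on generalizing U with
  | _ m IH =>
  by_cases hex : ∃ e ∈ U, ∃ f ∈ U, sympl n e f = 1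
  · -- inductive case
    obtain ⟨e, heU, f, hfU, hef⟩ := hex
    -- the subgroup U₁
    set Le : ((Fin n → ZMod 2) × (Fin n → ZMod 2)) →ₗ[ZMod 2] ZMod 2 :=
      { toFun := fun x => sympl n x e
        map_add' := fun x x' => sympl_add_left x x' e
        map_smul' := fun c x => by simp [sympl_smul_left] } with hLe
    set Lf : ((Fin n → ZMod 2) × (Fin n → ZMod 2)) →ₗ[ZMod 2] ZMod 2 :=
      { toFun := fun x => sympl n x f
        map_add' := fun x x' => sympl_add_left x x' f
        map_smul' := fun c x => by simp [sympl_smul_left] } with hLf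
    set U₁ : Submodule (ZMod 2) ((Fin n → ZMod 2) × (Fin n → ZMod 2)) :=
      U ⊓ (LinearMap.ker Le ⊓ LinearMap.ker Lf) with hU₁
    have hmemU₁ : ∀ z, z ∈ U₁ ↔ z ∈ U ∧ sympl n z e = 0 ∧ sympl n z f = 0 := by
      intro z
      simp [hU₁, Submodule.mem_inf, LinearMap.mem_ker, hLe, hLf]
    have hU₁U : U₁ ≤ U := inf_le_left
    -- membership lemmas
    have mem1 : ∀ (z : U₁) (a b : ZMod 2), (z : _) + a • e + b • f ∈ U := by
      intro z a b
      exact add_mem (add_mem (hU₁U z.2) (Submodule.smul_mem _ _ heU)) (Submodule.smul_mem _ _ hfU)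
    have mem2 : ∀ y : U, ((y : _) + (sympl n y f) • e + (sympl n y e) • f) ∈ U₁ := by
      intro y
      rw [hmemU₁]
      refine ⟨add_mem (add_mem y.2 (Submodule.smul_mem _ _ heU)) (Submodule.smul_mem _ _ hfU),
        ?_, ?_⟩
      · rw [sympl_add_left, sympl_add_left, sympl_smul_left, sympl_smul_left,
          sympl_self, sympl_comm f e, hef]
        linear_combination zmod2_add_self (sympl n (↑y) e)
      · rw [sympl_add_left, sympl_add_left, sympl_smul_left, sympl_smul_left,
          sympl_self, hef]
        linear_combination zmod2_add_self (sympl n (↑y) f)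
    -- the reindexing equivalence
    obtain ⟨E, hEcoe⟩ :
        ∃ E : (U₁ × (ZMod 2 × ZMod 2)) ≃ U,
          ∀ p, ((E p : U) : (Fin n → ZMod 2) × (Fin n → ZMod 2))
            = (p.1 : (Fin n → ZMod 2) × (Fin n → ZMod 2)) + p.2.1 • e + p.2.2 • f := by
      have hsymplU₁e : ∀ z : U₁, sympl n (z : _) e = 0 := fun z => ((hmemU₁ _).mp z.2).2.1
      have hsymplU₁f : ∀ z : U₁, sympl n (z : _) f = 0 := fun z => ((hmemU₁ _).mp z.2).2.2
      have hquad : ∀ (x : (Fin n → ZMod 2) × (Fin n → ZMod 2)) (a b : ZMod 2),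
          x + a • e + b • f + a • e + b • f = x := by
        intro x a b
        rw [quad_cancel, double_smul_zero, double_smul_zero, add_zero, add_zero]
      refine ⟨{ toFun := fun p => ⟨(p.1 : _) + p.2.1 • e + p.2.2 • f, mem1 p.1 p.2.1 p.2.2⟩
                invFun := fun y =>
                  (⟨(y : _) + (sympl n (y : _) f) • e + (sympl n (y : _) e) • f, mem2 y⟩,
                    (sympl n (y : _) f, sympl n (y : _) e))
                left_inv := ?_
                right_inv := ?_ }, fun p => rfl⟩
      · rintro ⟨z, a, b⟩
        have hA : sympl n ((z : _) + a • e + b • f) f = a := by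
          rw [sympl_add_left, sympl_add_left, sympl_smul_left, sympl_smul_left,
            sympl_self, hef, hsymplU₁f z]
          ring
        have hB : sympl n ((z : _) + a • e + b • f) e = b := by
          rw [sympl_add_left, sympl_add_left, sympl_smul_left, sympl_smul_left,
            sympl_self, sympl_comm f e, hef, hsymplU₁e z]
          ring
        refine Prod.ext ?_ (Prod.ext ?_ ?_)
        · apply Subtype.ext
          show (z : _) + a • e + b • f + (sympl n ((z:_) + a•e + b•f) f) • e
              + (sympl n ((z:_) + a•e + b•f) e) • f = (z : _)
          rw [hA, hB, hquad]
        · exact hA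
        · exact hB
      · intro y
        apply Subtype.ext
        show ((y : _) + (sympl n (y:_) f) • e + (sympl n (y:_) e) • f)
            + (sympl n (y:_) f) • e + (sympl n (y:_) e) • f = (y : _)
        rw [hquad]
    -- cardinality
    have hcard4 : Nat.card U = 4 * Nat.card U₁ := by
      have h1 : Nat.card U = Nat.card (U₁ × (ZMod 2 × ZMod 2)) := Nat.card_congr E.symm
      rw [h1, Nat.card_prod, Nat.card_prod, Nat.card_zmod]
      ring
    have hne : Nonempty U₁ := ⟨0⟩
    have hpos : 0 < Nat.card U₁ := Nat.card_pos
    have hlt : Nat.card U₁ < m := by omega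
    obtain ⟨k₁, R, hRU₁, hRperp₁, hcard₁, hbound₁⟩ := IH (Nat.card U₁) hlt U₁ le_rfl
    refine ⟨k₁ + 1, R, hRU₁.trans hU₁U, ?_, ?_, ?_⟩
    · -- R is perpendicular to all of U
      intro r hr z hz
      have hre : sympl n r e = 0 := ((hmemU₁ r).mp (hRU₁ hr)).2.1
      have hrf : sympl n r f = 0 := ((hmemU₁ r).mp (hRU₁ hr)).2.2
      have hz₁ : z + (sympl n z f) • e + (sympl n z e) • f ∈ U₁ := mem2 ⟨z, hz⟩
      have h0 : sympl n r (z + (sympl n z f) • e + (sympl n z e) • f) = 0 :=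
        hRperp₁ r hr _ hz₁
      have hdecomp : z = (z + (sympl n z f) • e + (sympl n z e) • f)
          + (sympl n z f) • e + (sympl n z e) • f := by
        rw [quad_cancel, double_smul_zero, double_smul_zero, add_zero, add_zero]
      calc sympl n r z
          = sympl n r ((z + (sympl n z f) • e + (sympl n z e) • f)
              + (sympl n z f) • e + (sympl n z e) • f) := by rw [← hdecomp]
        _ = sympl n r (z + (sympl n z f) • e + (sympl n z e) • f)
              + (sympl n z f) * sympl n r e + (sympl n z e) * sympl n r f := by
            rw [sympl_add_right, sympl_add_right, sympl_smul_right, sympl_smul_right]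
        _ = 0 := by rw [h0, hre, hrf]; ring
    · rw [hcard4, hcard₁]; ring
    · -- the mass bound
      intro g h
      have hsum2 : (∑ y : U, ‖inn g (Wop (y : _) h)‖ ^ 2)
          = ∑ z : U₁, 2 * (‖inn (pplus e g) (Wop (z : _) (pplus e h))‖^2
              + ‖inn (pminus e g) (Wop (z : _) (pminus e h))‖^2
              + ‖inn (pplus e g) (Wop (z : _) (Eop f (pminus e h)))‖^2
              + ‖inn (pminus e g) (Wop (z : _) (Eop f (pplus e h)))‖^2) := by
        rw [← Fintype.sum_equiv E
          (fun p => ‖inn g (Wop ((E p : U) : _) h)‖^2)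
          (fun y : U => ‖inn g (Wop (y : _) h)‖^2) (fun p => rfl)]
        rw [Fintype.sum_prod_type]
        apply Finset.sum_congr rfl
        intro z _
        rw [Fintype.sum_prod_type]
        rw [sum_zmod2, sum_zmod2, sum_zmod2]
        simp only [hEcoe, zero_smul, one_smul, add_zero]
        have hye : sympl n (z : _) e = 0 := ((hmemU₁ _).mp z.2).2.1
        have hcs := coset_sq g h hef hye
        linarith [hcs]
      rw [hsum2]
      have hexp : ∑ z : U₁, 2 * (‖inn (pplus e g) (Wop (z : _) (pplus e h))‖^2
              + ‖inn (pminus e g) (Wop (z : _) (pminus e h))‖^2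
              + ‖inn (pplus e g) (Wop (z : _) (Eop f (pminus e h)))‖^2
              + ‖inn (pminus e g) (Wop (z : _) (Eop f (pplus e h)))‖^2)
          = 2 * ((∑ z : U₁, ‖inn (pplus e g) (Wop (z : _) (pplus e h))‖^2)
              + (∑ z : U₁, ‖inn (pminus e g) (Wop (z : _) (pminus e h))‖^2)
              + (∑ z : U₁, ‖inn (pplus e g) (Wop (z : _) (Eop f (pminus e h)))‖^2)
              + (∑ z : U₁, ‖inn (pminus e g) (Wop (z : _) (Eop f (pplus e h)))‖^2)) := by
        rw [← Finset.sum_add_distrib, ← Finset.sum_add_distrib, ← Finset.sum_add_distrib,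
          ← Finset.mul_sum]
      rw [hexp]
      have b1 := hbound₁ (pplus e g) (pplus e h)
      have b2 := hbound₁ (pminus e g) (pminus e h)
      have b3 := hbound₁ (pplus e g) (Eop f (pminus e h))
      have b4 := hbound₁ (pminus e g) (Eop f (pplus e h))
      rw [ns_Eop] at b3 b4
      have hnsg := ns_pplus_add_ns_pminus e g
      have hnsh := ns_pplus_add_ns_pminus e h
      have hprod : ns (pplus e g) * ns (pplus e h) + ns (pminus e g) * ns (pminus e h)
          + ns (pplus e g) * ns (pminus e h) + ns (pminus e g) * ns (pplus e h)
          = ns g * ns h := by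
        rw [← hnsg, ← hnsh]; ring
      have hc : (Nat.card U : ℝ) = 4 * (Nat.card U₁ : ℝ) := by exact_mod_cast hcard4
      rw [hc, pow_succ]
      nlinarith [b1, b2, b3, b4, hprod]
  · -- base case : U isotropic
    push_neg at hex
    refine ⟨0, U, le_rfl, ?_, by norm_num, ?_⟩
    · intro r hr z hz
      rcases zmod2_cases (sympl n r z) with h0 | h1
      · exact h0
      · exact absurd h1 (hex r hr z hz)
    · intro g h
      rw [pow_zero, mul_one]
      have step : ∀ y : U, ‖inn g (Wop (y : _) h)‖ ^ 2 ≤ ns g * ns h := by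
        intro y
        calc ‖inn g (Wop (↑y) h)‖^2 ≤ ns g * ns (Wop (↑y) h) := cauchy_schwarz _ _
          _ = ns g * ns h := by rw [ns_Wop]
      calc (∑ y : U, ‖inn g (Wop (y : _) h)‖ ^ 2)
          ≤ ∑ _y : U, ns g * ns h := Finset.sum_le_sum (fun y _ => step y)
        _ = (Fintype.card U : ℝ) * (ns g * ns h) := by
            rw [Finset.sum_const, Finset.card_univ, nsmul_eq_mul]
        _ = (Nat.card U : ℝ) * (ns g * ns h) := by rw [Nat.card_eq_fintype_card]

/-! ### Lagrangian extension -/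

noncomputable def Bform (n : ℕ) :
    LinearMap.BilinForm (ZMod 2) ((Fin n → ZMod 2) × (Fin n → ZMod 2)) :=
  LinearMap.mk₂ (ZMod 2) (sympl n)
    (fun x x' y => sympl_add_left x x' y)
    (fun c x y => by rw [sympl_smul_left]; simp)
    (fun x y y' => sympl_add_right x y y')
    (fun c x y => by rw [sympl_smul_right]; simp)

@[simp] lemma Bform_apply (x y : (Fin n → ZMod 2) × (Fin n → ZMod 2)) :
    Bform n x y = sympl n x y := rfl

lemma Bform_refl : (Bform n).IsRefl := by
  intro x y hxy
  rw [Bform_apply] at *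
  rwa [sympl_comm]

def testvec (j : Fin n) : Fin n → ZMod 2 := fun i => if i = j then 1 else 0

lemma sum_single (x : Fin n → ZMod 2) (j : Fin n) :
    ∑ i, x i * testvec j i = x j := by
  unfold testvec
  simp [mul_ite, Finset.sum_ite_eq']

lemma Bform_nondeg : (Bform n).Nondegenerate := by
  refine Bform_refl.nondegenerate_iff_separatingLeft.mpr ?_
  intro x hx
  have h1 : ∀ j, x.1 j = 0 := by
    intro j
    have := hx (0, testvec j)
    rw [Bform_apply] at this
    unfold sympl at this
    simpa [sum_single] using this
  have h2 : ∀ j, x.2 j = 0 := by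
    intro j
    have := hx (testvec j, 0)
    rw [Bform_apply] at this
    unfold sympl at this
    simpa [sum_single] using this
  ext j
  · exact h1 j
  · exact h2 j

lemma finrank_amb : Module.finrank (ZMod 2) ((Fin n → ZMod 2) × (Fin n → ZMod 2)) = 2 * n := by
  rw [Module.finrank_prod, Module.finrank_pi]
  simp [Fintype.card_fin]
  ring

lemma isotropic_le_orth {W : Submodule (ZMod 2) ((Fin n → ZMod 2) × (Fin n → ZMod 2))}
    (hW : ∀ x ∈ W, ∀ y ∈ W, sympl n x y = 0) : W ≤ (Bform n).orthogonal W := by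
  intro x hx
  rw [LinearMap.BilinForm.mem_orthogonal_iff]
  intro y hy
  show Bform n y x = 0
  rw [Bform_apply]
  exact hW y hy x hx

lemma isotropic_finrank_le {W : Submodule (ZMod 2) ((Fin n → ZMod 2) × (Fin n → ZMod 2))}
    (hW : ∀ x ∈ W, ∀ y ∈ W, sympl n x y = 0) : Module.finrank (ZMod 2) W ≤ n := by
  have h1 := LinearMap.BilinForm.finrank_orthogonal (B := Bform n) Bform_nondeg W
  have h2 : Module.finrank (ZMod 2) W ≤ Module.finrank (ZMod 2) ((Bform n).orthogonal W) :=
    Submodule.finrank_mono (isotropic_le_orth hW)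
  rw [h1, finrank_amb] at h2
  have h3 : Module.finrank (ZMod 2) W
      ≤ Module.finrank (ZMod 2) ((Fin n → ZMod 2) × (Fin n → ZMod 2)) :=
    Submodule.finrank_le W
  rw [finrank_amb] at h3
  omega

lemma extend_to_lagrangian (j : ℕ) :
    ∀ (W : Submodule (ZMod 2) ((Fin n → ZMod 2) × (Fin n → ZMod 2))),
      (∀ x ∈ W, ∀ y ∈ W, sympl n x y = 0) → n - Module.finrank (ZMod 2) W ≤ j →
      ∃ L, IsLagrangian n L ∧ W ≤ L := by
  induction j with
  | zero =>
    intro W hW hj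
    have := isotropic_finrank_le hW
    exact ⟨W, ⟨by omega, hW⟩, le_rfl⟩
  | succ j ih =>
    intro W hW hj
    by_cases hfr : Module.finrank (ZMod 2) W = n
    · exact ⟨W, ⟨hfr, hW⟩, le_rfl⟩
    have hle := isotropic_finrank_le hW
    have hlt : Module.finrank (ZMod 2) W < n := lt_of_le_of_ne hle hfr
    have horth := LinearMap.BilinForm.finrank_orthogonal (B := Bform n) Bform_nondeg W
    rw [finrank_amb] at horth
    have hWlt : W < (Bform n).orthogonal W := by
      refine lt_of_le_of_ne (isotropic_le_orth hW) ?_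
      intro hEq
      have : Module.finrank (ZMod 2) W = 2 * n - Module.finrank (ZMod 2) W := by
        conv_lhs => rw [hEq]
        exact horth
      omega
    obtain ⟨x, hxorth, hxW⟩ := SetLike.exists_of_lt hWlt
    have hBWx : ∀ w ∈ W, sympl n w x = 0 := by
      intro w hw
      have := (LinearMap.BilinForm.mem_orthogonal_iff.mp hxorth) w hw
      rwa [Bform_apply] at this
    set W' := W ⊔ Submodule.span (ZMod 2) {x} with hW'
    have memW' : ∀ a ∈ W', ∃ w ∈ W, ∃ c : ZMod 2, a = w + c • x := by
      intro a ha
      rw [hW', Submodule.mem_sup] at ha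
      obtain ⟨w, hw, s, hs, rfl⟩ := ha
      rw [Submodule.mem_span_singleton] at hs
      obtain ⟨c, rfl⟩ := hs
      exact ⟨w, hw, c, rfl⟩
    have hW'iso : ∀ a ∈ W', ∀ b ∈ W', sympl n a b = 0 := by
      intro a ha b hb
      obtain ⟨w, hw, c, rfl⟩ := memW' a ha
      obtain ⟨w', hw', c', rfl⟩ := memW' b hb
      rw [sympl_add_left, sympl_add_right, sympl_add_right, sympl_smul_left, sympl_smul_left,
        sympl_smul_right, sympl_smul_right]
      rw [hW w hw w' hw', hBWx w hw, sympl_self, sympl_comm x w', hBWx w' hw']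
      ring
    have hWW' : W < W' := by
      refine lt_of_le_of_ne le_sup_left ?_
      intro hEq
      apply hxW
      rw [hEq]
      exact Submodule.mem_sup_right (Submodule.mem_span_singleton_self x)
    have hfrlt : Module.finrank (ZMod 2) W < Module.finrank (ZMod 2) W' :=
      Submodule.finrank_lt_finrank_of_lt hWW'
    obtain ⟨L, hL, hWL⟩ := ih W' hW'iso (by omega)
    exact ⟨L, hL, le_trans (le_of_lt hWW') hWL⟩

lemma charDist_eq (f : (Fin n → ZMod 2) → ℂ) (y : (Fin n → ZMod 2) × (Fin n → ZMod 2)) :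
    (2:ℝ)^n * charDist n f y = ‖inn f (Wop y f)‖^2 := by
  unfold charDist
  rw [← mul_assoc, mul_inv_cancel₀ (by positivity), one_mul]
  have hS : (∑ x : Fin n → ZMod 2,
        f x * (starRingEnd ℂ) (f (x + y.1)) * (-1 : ℂ)^(∑ i, y.2 i * x i : ZMod 2).val)
      = (starRingEnd ℂ) (inn f (Wop y f)) := by
    unfold inn Wop
    rw [map_sum]
    apply Finset.sum_congr rfl
    intro x _
    rw [map_mul, map_mul, Complex.conj_conj, conj_sgn]
    have hsgn : ((-1 : ℂ))^(∑ i, y.2 i * x i : ZMod 2).val = sgn (ip y.2 x) := rfl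
    rw [hsgn]
    ring
  rw [hS, RCLike.norm_conj]

open scoped Classical in
theorem stmt_13' (n : ℕ) (hn : 1 ≤ n) (f : (Fin n → ZMod 2) → ℂ)
    (hf : ∑ x : Fin n → ZMod 2, ‖f x‖ ^ 2 = 1)
    (γ : ℝ) (hγ : γ ∈ Set.Ioc (0 : ℝ) 1)
    (V : Submodule (ZMod 2) ((Fin n → ZMod 2) × (Fin n → ZMod 2)))
    (hV : ((Nat.card V : ℝ))⁻¹ *
        ∑ y : V, (2 : ℝ) ^ n *
          charDist n f (y : (Fin n → ZMod 2) × (Fin n → ZMod 2)) ≥ γ) :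
    ∃ N : ℕ, 1 ≤ N ∧ (N : ℝ) ≤ (1 / γ) ^ 2 ∧
      ∃ L : Fin N → Submodule (ZMod 2) ((Fin n → ZMod 2) × (Fin n → ZMod 2)),
        (∀ i, IsLagrangian n (L i)) ∧
        (V : Set ((Fin n → ZMod 2) × (Fin n → ZMod 2))) ⊆
          ⋃ i, (L i : Set ((Fin n → ZMod 2) × (Fin n → ZMod 2))) := by
  obtain ⟨hγ0, hγ1⟩ := hγ
  -- apply the main mass bound
  obtain ⟨k, R, hRV, hRperp, hcard, hbound⟩ :=
    main_bound (Nat.card V) V le_rfl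
  have hnsf : ns f = 1 := hf
  have hVpos : 0 < (Nat.card V : ℝ) := by
    have : Nonempty V := ⟨0⟩
    exact_mod_cast Nat.card_pos
  -- γ ≤ (2^k)⁻¹
  have hsum_eq : (∑ y : V, (2 : ℝ) ^ n * charDist n f (y : _))
      = ∑ y : V, ‖inn f (Wop (y : _) f)‖^2 :=
    Finset.sum_congr rfl (fun y _ => charDist_eq f _)
  have hb := hbound f f
  rw [hnsf] at hb
  have hγk : γ * 2^k ≤ 1 := by
    have h2k : (0:ℝ) < 2^k := by positivity
    have hle : γ ≤ ((Nat.card V : ℝ))⁻¹ * ∑ y : V, ‖inn f (Wop (y : _) f)‖^2 := by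
      have := hV
      rwa [hsum_eq] at this
    have h2 := mul_le_mul_of_nonneg_right hle hVpos.le
    have h3 : ((Nat.card V : ℝ))⁻¹ * (∑ y : V, ‖inn f (Wop (y : _) f)‖^2) * (Nat.card V : ℝ)
        = ∑ y : V, ‖inn f (Wop (y : _) f)‖^2 := by
      field_simp
    rw [h3] at h2
    nlinarith [hb, h2, hVpos]
  -- choose N = 4^k
  refine ⟨4^k, Nat.one_le_pow _ _ (by norm_num), ?_, ?_⟩
  · have h2k : (0:ℝ) < 2^k := by positivity
    have h1 : (2:ℝ)^k ≤ 1/γ := by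
      rw [le_div_iff₀ hγ0]
      linarith [hγk]
    have h2 : ((2:ℝ)^k)^2 ≤ (1/γ)^2 := by
      apply pow_le_pow_left₀ (le_of_lt h2k) h1
    have h3 : ((4:ℝ))^k = ((2:ℝ)^k)^2 := by
      rw [← pow_mul, mul_comm, pow_mul]
      norm_num
    push_cast
    rw [h3]
    exact h2
  -- construct the covering
  · set Rin : Submodule (ZMod 2) V := R.comap V.subtype with hRin
    have hcardRin : Nat.card Rin = Nat.card R :=
      Nat.card_congr (Submodule.comapSubtypeEquivOfLe hRV).toEquiv
    have hq : Nat.card V = Nat.card Rin * Nat.card (V ⧸ Rin) :=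
      Submodule.card_eq_card_quotient_mul_card Rin
    have hRpos : 0 < Nat.card R := by
      have : Nonempty R := ⟨0⟩
      exact Nat.card_pos
    have hcardQ : Nat.card (V ⧸ Rin) = 4^k := by
      rw [hcardRin, hcard, mul_comm (Nat.card R) (Nat.card (V ⧸ Rin))] at hq
      exact (Nat.eq_of_mul_eq_mul_right hRpos hq).symm
    haveI : Fintype (V ⧸ Rin) := Fintype.ofFinite _
    have hcardQ' : Fintype.card (V ⧸ Rin) = 4^k := by
      rw [← Nat.card_eq_fintype_card, hcardQ]
    set eqv : Fin (4^k) ≃ (V ⧸ Rin) := (Fintype.equivFinOfCardEq hcardQ').symm with heqv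
    have hreps : ∀ q : V ⧸ Rin, ∃ v : V, Submodule.Quotient.mk v = q :=
      fun q => Quotient.exists_rep q
    choose rep hrep using hreps
    set xq : (V ⧸ Rin) → (Fin n → ZMod 2) × (Fin n → ZMod 2) :=
      fun q => ((rep q : V) : (Fin n → ZMod 2) × (Fin n → ZMod 2)) with hxq
    -- isotropic subspaces
    have hiso : ∀ q : V ⧸ Rin, ∀ a ∈ R ⊔ Submodule.span (ZMod 2) {xq q},
        ∀ b ∈ R ⊔ Submodule.span (ZMod 2) {xq q}, sympl n a b = 0 := by
      intro q a ha b hb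
      have hx : xq q ∈ V := (rep q).2
      have hmem : ∀ c ∈ R ⊔ Submodule.span (ZMod 2) {xq q},
          ∃ r ∈ R, ∃ co : ZMod 2, c = r + co • xq q := by
        intro c hc
        rw [Submodule.mem_sup] at hc
        obtain ⟨r, hr, s, hs, rfl⟩ := hc
        rw [Submodule.mem_span_singleton] at hs
        obtain ⟨co, rfl⟩ := hs
        exact ⟨r, hr, co, rfl⟩
      obtain ⟨r, hr, c1, rfl⟩ := hmem a ha
      obtain ⟨r', hr', c2, rfl⟩ := hmem b hb
      rw [sympl_add_left, sympl_add_right, sympl_add_right, sympl_smul_left, sympl_smul_left,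
        sympl_smul_right, sympl_smul_right]
      rw [hRperp r hr r' (hRV hr'), hRperp r hr _ hx, sympl_self,
        sympl_comm _ r', hRperp r' hr' _ hx]
      ring
    have hlag : ∀ q : V ⧸ Rin, ∃ L, IsLagrangian n L ∧
        R ⊔ Submodule.span (ZMod 2) {xq q} ≤ L := by
      intro q
      exact extend_to_lagrangian n _ (hiso q) (Nat.sub_le _ _)
    choose Lag hLag hLagLe using hlag
    refine ⟨fun i => Lag (eqv i), fun i => hLag _, ?_⟩
    intro v hv
    rw [Set.mem_iUnion]
    set q : V ⧸ Rin := Submodule.Quotient.mk (⟨v, hv⟩ : V) with hqdef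
    refine ⟨eqv.symm q, ?_⟩
    have heq : eqv (eqv.symm q) = q := Equiv.apply_symm_apply _ _
    have hdiff : (⟨v, hv⟩ : V) - rep q ∈ Rin := by
      rw [← Submodule.Quotient.eq]
      rw [hrep q]
    have hdiffR : v - xq q ∈ R := hdiff
    have hvmem : v ∈ R ⊔ Submodule.span (ZMod 2) {xq q} := by
      have hsplit : v = (v - xq q) + xq q := by abel
      rw [hsplit]
      exact Submodule.add_mem _ (Submodule.mem_sup_left hdiffR)
        (Submodule.mem_sup_right (Submodule.mem_span_singleton_self _))
    show v ∈ (Lag (eqv (eqv.symm q)) : Set ((Fin n → ZMod 2) × (Fin n → ZMod 2)))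
    rw [heq]
    exact hLagLe q hvmem

end Stmt13

open scoped Classical in
/-- a subgroup `V` carrying a `γ` fraction of the characteristic
distribution mass (on average) admits a stabilizer covering of size at most `γ⁻²`. -/
theorem stmt_13 (n : ℕ) (hn : 1 ≤ n) (f : (Fin n → ZMod 2) → ℂ)
    (hf : ∑ x : Fin n → ZMod 2, ‖f x‖ ^ 2 = 1)
    (γ : ℝ) (hγ : γ ∈ Set.Ioc (0 : ℝ) 1)
    (V : Submodule (ZMod 2) ((Fin n → ZMod 2) × (Fin n → ZMod 2)))
    (hV : ((Nat.card V : ℝ))⁻¹ *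
        ∑ y : V, (2 : ℝ) ^ n *
          charDist n f (y : (Fin n → ZMod 2) × (Fin n → ZMod 2)) ≥ γ) :
    ∃ N : ℕ, 1 ≤ N ∧ (N : ℝ) ≤ (1 / γ) ^ 2 ∧
      ∃ L : Fin N → Submodule (ZMod 2) ((Fin n → ZMod 2) × (Fin n → ZMod 2)),
        (∀ i, IsLagrangian n (L i)) ∧
        (V : Set ((Fin n → ZMod 2) × (Fin n → ZMod 2))) ⊆
          ⋃ i, (L i : Set ((Fin n → ZMod 2) × (Fin n → ZMod 2))) := by
  exact Stmt13.stmt_13' n hn f hf γ hγ V hV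
end

section
/- Let A, B ⊆ 𝔽₂^{2n} with B finite, and suppose there exist M ≥ 1 and elements c₁, …, c_M ∈ 𝔽₂^{2n} such that A ⊆ ⋃_{i=1}^{M} (cᵢ + B), i.e., A is covered by at most M translates of B. Then nac(A) ≤ 2M · nac(B); that is, every finite subset T ⊆ A with [x,y] = 1 for all distinct x, y ∈ T satisfies |T| ≤ 2M · nac(B). -/
open Finset
open scoped Pointwise

/-- `nac A`: the maximum cardinality of a finite subset of `A` whose elements
pairwise anticommute (pairwise symplectic product `1`). -/
noncomputable def nac (n : ℕ) (A : Set ((Fin n → ZMod 2) × (Fin n → ZMod 2))) : ℕ :=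
  sSup {k | ∃ T : Finset ((Fin n → ZMod 2) × (Fin n → ZMod 2)),
    ↑T ⊆ A ∧ (∀ x ∈ T, ∀ y ∈ T, x ≠ y → sympl n x y = 1) ∧ T.card = k}

lemma sympl_add_left (n : ℕ) (a b y : (Fin n → ZMod 2) × (Fin n → ZMod 2)) :
    sympl n (a + b) y = sympl n a y + sympl n b y := by
  simp [sympl, add_mul, Finset.sum_add_distrib]; ring

lemma sympl_add_right (n : ℕ) (x a b : (Fin n → ZMod 2) × (Fin n → ZMod 2)) :
    sympl n x (a + b) = sympl n x a + sympl n x b := by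
  simp [sympl, mul_add, Finset.sum_add_distrib]; ring

lemma sympl_comm (n : ℕ) (x y : (Fin n → ZMod 2) × (Fin n → ZMod 2)) :
    sympl n x y = sympl n y x := by
  unfold sympl
  rw [add_comm]
  congr 1 <;> exact Finset.sum_congr rfl (fun i _ => mul_comm _ _)

lemma sympl_self (n : ℕ) (x : (Fin n → ZMod 2) × (Fin n → ZMod 2)) :
    sympl n x x = 0 := by
  unfold sympl
  rw [show (∑ i, x.2 i * x.1 i) = ∑ i, x.1 i * x.2 i from
    Finset.sum_congr rfl (fun i _ => mul_comm _ _)]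
  exact CharTwo.add_self_eq_zero _

lemma add_self_zero (n : ℕ) (x : (Fin n → ZMod 2) × (Fin n → ZMod 2)) :
    x + x = 0 := by
  ext i <;> exact CharTwo.add_self_eq_zero _

lemma card_le_nac (n : ℕ) (B : Set ((Fin n → ZMod 2) × (Fin n → ZMod 2)))
    (hB : B.Finite) (S : Finset ((Fin n → ZMod 2) × (Fin n → ZMod 2)))
    (hS : ↑S ⊆ B) (h : ∀ x ∈ S, ∀ y ∈ S, x ≠ y → sympl n x y = 1) :
    S.card ≤ nac n B := by
  apply le_csSup
  · refine ⟨hB.toFinset.card, ?_⟩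
    rintro k ⟨T, hT, -, rfl⟩
    exact Finset.card_le_card (fun x hx => hB.mem_toFinset.2 (hT hx))
  · exact ⟨S, hS, h, rfl⟩

/-- if `A` is covered by at most `M` translates of `B`, then every
finite pairwise-anticommuting subset of `A` has size at most `2M·nac(B)`. -/
theorem stmt_16 (n : ℕ) (hn : 1 ≤ n)
    (A B : Set ((Fin n → ZMod 2) × (Fin n → ZMod 2))) (hB : B.Finite)
    (M : ℕ) (hM : 1 ≤ M) (c : Fin M → (Fin n → ZMod 2) × (Fin n → ZMod 2))
    (hcov : A ⊆ ⋃ i, (c i +ᵥ B)) :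
    ∀ T : Finset ((Fin n → ZMod 2) × (Fin n → ZMod 2)),
      ↑T ⊆ A → (∀ x ∈ T, ∀ y ∈ T, x ≠ y → sympl n x y = 1) →
      T.card ≤ 2 * M * nac n B := by
  classical
  intro T hTA hanti
  set f : Fin M → Finset ((Fin n → ZMod 2) × (Fin n → ZMod 2)) :=
    fun i => T.filter (fun x => x ∈ c i +ᵥ B) with hf
  have hT : T ⊆ Finset.univ.biUnion f := by
    intro x hx
    obtain ⟨s, ⟨i, rfl⟩, hi⟩ := hcov (hTA hx)
    exact Finset.mem_biUnion.2 ⟨i, Finset.mem_univ i, Finset.mem_filter.2 ⟨hx, hi⟩⟩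
  have key : ∀ i, (f i).card ≤ 2 * nac n B := by
    intro i
    -- membership in translate gives translation back into B
    have hmem : ∀ x ∈ f i, c i + x ∈ B := by
      intro x hx
      obtain ⟨b, hb, rfl⟩ := (Finset.mem_filter.1 hx).2
      show c i + (c i +ᵥ b) ∈ B
      rw [show (c i +ᵥ b) = c i + b from rfl, ← add_assoc, add_self_zero, zero_add]
      exact hb
    -- bound each half
    have half : ∀ (p : (Fin n → ZMod 2) × (Fin n → ZMod 2) → Prop) [DecidablePred p],
        (∀ x ∈ f i, ∀ y ∈ f i, p x → p y → x ≠ y → sympl n (c i + x) (c i + y) = 1) →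
        ((f i).filter p).card ≤ nac n B := by
      intro p _ hp
      have hinj : Set.InjOn (fun x => c i + x) ((f i).filter p : Set _) :=
        fun a _ b _ h => by simpa using add_left_cancel h
      rw [← Finset.card_image_of_injOn hinj]
      apply card_le_nac n B hB
      · intro x hx
        simp only [Finset.coe_image, Set.mem_image] at hx
        obtain ⟨a, ha, rfl⟩ := hx
        exact hmem a (Finset.mem_filter.1 (by exact_mod_cast ha)).1
      · intro x hx y hy hxy
        simp only [Finset.mem_image] at hx hy
        obtain ⟨a, ha, rfl⟩ := hx
        obtain ⟨b, hb, rfl⟩ := hy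
        have hab : a ≠ b := fun h => hxy (by rw [h])
        have ha' := Finset.mem_filter.1 ha
        have hb' := Finset.mem_filter.1 hb
        exact hp a ha'.1 b hb'.1 ha'.2 hb'.2 hab
    have expand : ∀ x y, sympl n (c i + x) (c i + y)
        = sympl n x y + sympl n (c i) x + sympl n (c i) y := by
      intro x y
      rw [sympl_add_left, sympl_add_right, sympl_add_right, sympl_self,
        sympl_comm n x (c i)]
      ring
    have h01 : ∀ a : ZMod 2, a = 0 ∨ a = 1 := by decide
    have hval : ∀ x ∈ f i, ∀ y ∈ f i, x ≠ y → sympl n x y = 1 := by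
      intro x hx y hy hxy
      exact hanti x (Finset.mem_filter.1 hx).1 y (Finset.mem_filter.1 hy).1 hxy
    have h0 : ((f i).filter (fun x => sympl n (c i) x = 0)).card ≤ nac n B := by
      apply half
      intro x hx y hy hpx hpy hxy
      rw [expand, hval x hx y hy hxy, hpx, hpy]
      decide
    have h1 : ((f i).filter (fun x => ¬ sympl n (c i) x = 0)).card ≤ nac n B := by
      apply half
      intro x hx y hy hpx hpy hxy
      have hpx1 : sympl n (c i) x = 1 := (h01 _).resolve_left hpx
      have hpy1 : sympl n (c i) y = 1 := (h01 _).resolve_left hpy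
      rw [expand, hval x hx y hy hxy, hpx1, hpy1]
      decide
    calc (f i).card
        = ((f i).filter (fun x => sympl n (c i) x = 0)).card
          + ((f i).filter (fun x => ¬ sympl n (c i) x = 0)).card :=
          (Finset.card_filter_add_card_filter_not _).symm
      _ ≤ nac n B + nac n B := Nat.add_le_add h0 h1
      _ = 2 * nac n B := by ring
  calc T.card ≤ (Finset.univ.biUnion f).card := Finset.card_le_card hT
    _ ≤ ∑ i, (f i).card := Finset.card_biUnion_le
    _ ≤ ∑ _i : Fin M, 2 * nac n B := Finset.sum_le_sum (fun i _ => key i)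
    _ = M * (2 * nac n B) := by simp [mul_comm]
    _ = 2 * M * nac n B := by ring
end

section
/- (Uncertainty relation for anticommuting Paulis.) Let d ≥ 1 and let P₁, …, P_M be d × d complex matrices that are Hermitian, satisfy Pⱼ² = I for every j, and pairwise anticommute: P_a P_b + P_b P_a = 0 for all a ≠ b. Let ρ be a d × d Hermitian positive semidefinite matrix with trace 1. Then ∑_{j=1}^{M} (Tr(ρ Pⱼ))² ≤ 1, where each Tr(ρ Pⱼ) is a real number. -/
open Finset
open scoped ComplexOrder
open Matrix

lemma psd_diag_nonneg' {n : Type*} [Fintype n] [DecidableEq n]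
    {A : Matrix n n ℂ} (hA : A.PosSemidef) (i : n) : 0 ≤ A i i := by
  exact hA.diag_nonneg

lemma psd_trace_nonneg' {n : Type*} [Fintype n] [DecidableEq n]
    {A : Matrix n n ℂ} (hA : A.PosSemidef) : 0 ≤ A.trace :=
  Finset.sum_nonneg fun i _ => psd_diag_nonneg' hA i

lemma trace_mul_psd_nonneg' {n : Type*} [Fintype n] [DecidableEq n]
    {A B : Matrix n n ℂ} (hA : A.PosSemidef) (hB : B.PosSemidef) :
    0 ≤ (A * B).trace := by
  open scoped MatrixOrder in
  obtain ⟨C, rfl⟩ := CStarAlgebra.nonneg_iff_eq_star_mul_self.mp hB.nonneg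
  rw [Matrix.star_eq_conjTranspose]
  have h : (A * (Cᴴ * C)).trace = (C * A * Cᴴ).trace := by
    rw [← Matrix.mul_assoc, Matrix.trace_mul_comm, ← Matrix.mul_assoc]
  rw [h]
  exact psd_trace_nonneg' (hA.mul_mul_conjTranspose_same C)



/-- uncertainty relation for pairwise anticommuting Pauli-like
operators: `∑_j Tr(ρ Pⱼ)² ≤ 1`. -/
theorem stmt_19 (d : ℕ) (hd : 1 ≤ d) (M : ℕ)
    (P : Fin M → Matrix (Fin d) (Fin d) ℂ)
    (hHerm : ∀ j, (P j).IsHermitian)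
    (hsq : ∀ j, P j * P j = 1)
    (hanti : ∀ a b, a ≠ b → P a * P b + P b * P a = 0)
    (ρ : Matrix (Fin d) (Fin d) ℂ)
    (hρH : ρ.IsHermitian) (hρpsd : ρ.PosSemidef) (hρtr : ρ.trace = 1) :
    ∑ j, ((ρ * P j).trace.re) ^ 2 ≤ 1 := by
  --
  set t : Fin M → ℝ := fun j => (ρ * P j).trace.re with ht
  have htr : ∀ j, (ρ * P j).trace = (t j : ℂ) := by
    intro j
    have h1 : star (ρ * P j).trace = (ρ * P j).trace := by
      rw [← Matrix.trace_conjTranspose, Matrix.conjTranspose_mul, (hHerm j).eq, hρH.eq,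
        Matrix.trace_mul_comm]
    exact (Complex.conj_eq_iff_re.mp h1).symm
  set S : ℝ := ∑ j, t j ^ 2 with hS
  set Q : Matrix (Fin d) (Fin d) ℂ := ∑ j, (t j : ℂ) • P j with hQ
  have hQH : Q.IsHermitian := by
    unfold Q
    unfold Matrix.IsHermitian
    rw [Matrix.conjTranspose_sum]
    refine Finset.sum_congr rfl fun j _ => ?_
    rw [Matrix.conjTranspose_smul, (hHerm j).eq]
    simp
  have hQexp : Q * Q = ∑ a, ∑ b, ((t a : ℂ) * (t b : ℂ)) • (P a * P b) := by
    rw [hQ, Finset.sum_mul_sum]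
    refine Finset.sum_congr rfl fun a _ => Finset.sum_congr rfl fun b _ => ?_
    rw [Matrix.smul_mul, Matrix.mul_smul, smul_smul]
  have hQQ2 : Q * Q + Q * Q = ((2 * S : ℝ) : ℂ) • 1 := by
    nth_rewrite 2 [hQexp]
    rw [Finset.sum_comm]
    rw [hQexp, ← Finset.sum_add_distrib]
    have : ∀ a ∈ Finset.univ, (∑ b, ((t a : ℂ) * (t b : ℂ)) • (P a * P b)
        + ∑ b, ((t b : ℂ) * (t a : ℂ)) • (P b * P a))
        = ((2 * t a ^ 2 : ℝ) : ℂ) • 1 := by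
      intro a _
      rw [← Finset.sum_add_distrib]
      rw [Finset.sum_eq_single a]
      · rw [hsq a, ← add_smul]
        push_cast
        ring_nf
      · intro b _ hba
        rw [mul_comm ((t b : ℂ)) ((t a : ℂ)), ← smul_add, hanti a b (Ne.symm hba), smul_zero]
      · intro h; exact absurd (Finset.mem_univ a) h
    rw [Finset.sum_congr rfl this, ← Finset.sum_smul, hS]
    push_cast
    rw [Finset.mul_sum]
  have hQQ : Q * Q = ((S : ℝ) : ℂ) • 1 := by
    have h2 : (2 : ℂ) • (Q * Q) = (2 : ℂ) • (((S : ℝ) : ℂ) • 1) := by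
      rw [two_smul, hQQ2, smul_smul]
      push_cast
      ring_nf
    exact smul_right_injective _ two_ne_zero h2
  have hTrQ : (ρ * Q).trace = (S : ℂ) := by
    rw [hQ, Finset.mul_sum, Matrix.trace_sum]
    have : ∀ j ∈ Finset.univ, (ρ * ((t j : ℂ) • P j)).trace = ((t j ^ 2 : ℝ) : ℂ) := by
      intro j _
      rw [Matrix.mul_smul, Matrix.trace_smul, htr j, smul_eq_mul]
      push_cast; ring
    rw [Finset.sum_congr rfl this, hS]
    push_cast
    rfl
  set N : Matrix (Fin d) (Fin d) ℂ := ((S : ℝ) : ℂ) • 1 - Q with hN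
  have hNH : N.IsHermitian := by
    unfold Matrix.IsHermitian
    rw [hN, Matrix.conjTranspose_sub, Matrix.conjTranspose_smul, Matrix.conjTranspose_one, hQH.eq]
    simp
  have hNNpsd : (N * N).PosSemidef := by
    have : N * N = Nᴴ * N := by rw [hNH.eq]
    rw [this]
    exact Matrix.posSemidef_conjTranspose_mul_self N
  have hnn : 0 ≤ (ρ * (N * N)).trace := trace_mul_psd_nonneg' hρpsd hNNpsd
  have hNNval : (ρ * (N * N)).trace = ((S - S ^ 2 : ℝ) : ℂ) := by
    have hNN : N * N = ((S ^ 2 : ℝ) : ℂ) • 1 - ((S : ℝ) : ℂ) • Q - ((S : ℝ) : ℂ) • Q + Q * Q := by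
      simp only [hN, Matrix.sub_mul, Matrix.mul_sub, Matrix.smul_mul, Matrix.mul_smul,
        Matrix.one_mul, Matrix.mul_one, smul_smul]
      push_cast
      module
    rw [hNN, hQQ]
    rw [Matrix.mul_add, Matrix.mul_sub, Matrix.mul_sub, Matrix.mul_smul, Matrix.mul_smul,
      Matrix.mul_smul, Matrix.mul_one, Matrix.trace_add, Matrix.trace_sub, Matrix.trace_sub,
      Matrix.trace_smul, Matrix.trace_smul, Matrix.trace_smul, hρtr, hTrQ]
    push_cast
    simp only [smul_eq_mul]
    ring
  rw [hNNval] at hnn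
  have hreal : (0 : ℝ) ≤ S - S ^ 2 := by
    rwa [← Complex.ofReal_zero, Complex.real_le_real] at hnn
  have hS0 : 0 ≤ S := Finset.sum_nonneg fun j _ => sq_nonneg _
  show S ≤ 1
  nlinarith
end
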